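/- arXiv:1311.0956 — 2 statements merged into one kernel-verified Lean document; each statement's English description precedes it below -/
import Mathlib

section
/- On ℝ⁴ ∖ {0} identified with ℂ² via the hyperkähler triple (J₁,J₂,J₃), the function ψ = 1/r² satisfies dd^{C}ψ = (4/r⁴)(dr ∧ J₁dr − J₂dr ∧ J₃dr), where d^C is taken with respect to J₁ and Jᵢdr is the 1-form dr composed with Jᵢ. Moreover this 2-form is anti-self-dual for the standard metric and orientation. -/
/-! Off the origin `d^Cψ(X) = 2⟪x, J₁X⟫ / r⁴`, and differentiating once more gives
`dd^Cψ = (4 / r⁴)(2 dr ∧ J₁dr − ω₁)`. For every covector `α` the quaternion relations give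
`J₂α ∧ J₃α = |α|² ω₁ − α ∧ J₁α`; since `|dr| = 1` this turns the previous formula into
`(4 / r⁴)(dr ∧ J₁dr − J₂dr ∧ J₃dr)`. That `α ∧ J₁α − J₂α ∧ J₃α` is orthogonal to `ω₁, ω₂, ω₃`
is a quadratic identity in the components of `α`. -/

noncomputable section

open Finset

abbrev E4 := EuclideanSpace ℝ (Fin 4)

/-- Component matrices of the standard self-dual 2-forms
`ω₁ = dx¹∧dx² + dx³∧dx⁴`, `ω₂ = dx¹∧dx³ − dx²∧dx⁴`, `ω₃ = dx¹∧dx⁴ + dx²∧dx³`. -/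
def sdBasis : Fin 3 → Matrix (Fin 4) (Fin 4) ℝ :=
  ![!![0,1,0,0; -1,0,0,0; 0,0,0,1; 0,0,-1,0],
    !![0,0,1,0; 0,0,0,-1; -1,0,0,0; 0,1,0,0],
    !![0,0,0,1; 0,0,1,0; 0,-1,0,0; -1,0,0,0]]

/-- The vector `Jᵢ e_k`: `(Jᵢ e_k)_a = (sdBasis i) k a`. -/
def Je (i : Fin 3) (k : Fin 4) : E4 :=
  ∑ a : Fin 4, sdBasis i k a • EuclideanSpace.single a (1 : ℝ)

/-- Components of `dr`. -/
def dr (a : Fin 4) (x : E4) : ℝ :=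
  fderiv ℝ (fun y : E4 => ‖y‖) x (EuclideanSpace.single a 1)

/-- Components of the 1-form `Jᵢ dr`: `(Jᵢ dr)(X) = −dr(JᵢX)`. -/
def Jdr (i : Fin 3) (b : Fin 4) (x : E4) : ℝ :=
  -(fderiv ℝ (fun y : E4 => ‖y‖) x (Je i b))

/-- The potential `ψ = 1/r²`. -/
def psi (x : E4) : ℝ := (‖x‖ ^ 2)⁻¹

/-- Components of `d^C ψ` with respect to `J₁`: `d^Cψ(X) = −dψ(J₁X)`. -/
def dCpsi (b : Fin 4) (x : E4) : ℝ := -(fderiv ℝ psi x (Je 0 b))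

/-- Components of `dd^C ψ`. -/
def ddC (a b : Fin 4) (x : E4) : ℝ :=
  fderiv ℝ (dCpsi b) x (EuclideanSpace.single a 1)
    - fderiv ℝ (dCpsi a) x (EuclideanSpace.single b 1)

open scoped RealInnerProductSpace

section InnerProductSpace

variable {E : Type*} [NormedAddCommGroup E] [InnerProductSpace ℝ E] {x : E}

theorem hasFDerivAt_norm_of_ne_zero (hx : x ≠ 0) :
    HasFDerivAt (‖·‖) (‖x‖⁻¹ • innerSL ℝ x) x := by
  have hsqrt := (Real.hasDerivAt_sqrt (by positivity : ‖x‖ ^ 2 ≠ 0)).comp_hasFDerivAt x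
    (hasStrictFDerivAt_norm_sq x).hasFDerivAt
  simp only [Function.comp_def, Real.sqrt_sq (norm_nonneg _)] at hsqrt
  refine hsqrt.congr_fderiv ?_
  ext v
  simp only [smul_apply, smul_eq_mul, nsmul_eq_mul, Nat.cast_ofNat]
  field_simp

theorem hasFDerivAt_inv_norm_sq (hx : x ≠ 0) :
    HasFDerivAt (fun y : E => (‖y‖ ^ 2)⁻¹) ((-2 / ‖x‖ ^ 4) • innerSL ℝ x) x := by
  refine ((hasDerivAt_inv (by positivity)).comp_hasFDerivAt x
    (hasStrictFDerivAt_norm_sq x).hasFDerivAt).congr_fderiv ?_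
  ext v
  simp only [smul_apply, smul_eq_mul, nsmul_eq_mul, Nat.cast_ofNat]
  ring

theorem hasFDerivAt_inner_div_norm_pow_four (w : E) (hx : x ≠ 0) :
    HasFDerivAt (fun y : E => ⟪y, w⟫ / ‖y‖ ^ 4)
      ((‖x‖ ^ 4)⁻¹ • innerSL ℝ w - (4 * ⟪x, w⟫ / ‖x‖ ^ 6) • innerSL ℝ x) x := by
  have hfun : (fun y : E => ⟪y, w⟫ / ‖y‖ ^ 4) = fun y => innerSL ℝ w y * ((‖y‖ ^ 2)⁻¹) ^ 2 := by
    ext y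
    rw [innerSL_apply_apply, real_inner_comm]
    ring
  have hx' : ‖x‖ ≠ 0 := norm_ne_zero_iff.mpr hx
  rw [hfun]
  refine (((innerSL ℝ w).hasFDerivAt).fun_mul ((hasFDerivAt_inv_norm_sq hx).pow 2)).congr_fderiv ?_
  ext v
  simp only [add_apply, sub_apply, smul_apply, innerSL_apply_apply, smul_eq_mul, nsmul_eq_mul,
    real_inner_comm w, Nat.add_one_sub_one, pow_one]
  field_simp
  ring

end InnerProductSpace

open scoped Matrix

def wedge {n R : Type*} [CommRing R] (α β : n → R) : Matrix n n R :=
  fun a b => α a * β b - α b * β a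

def jCovector (i : Fin 3) (α : Fin 4 → ℝ) : Fin 4 → ℝ := -(sdBasis i *ᵥ α)

def jWedgeForm (α : Fin 4 → ℝ) : Matrix (Fin 4) (Fin 4) ℝ :=
  wedge α (jCovector 0 α) - wedge (jCovector 1 α) (jCovector 2 α)

theorem sdBasis_transpose (i : Fin 3) : (sdBasis i)ᵀ = -sdBasis i := by
  ext a b
  fin_cases i <;> fin_cases a <;> fin_cases b <;> simp [sdBasis]

theorem wedge_jCovector_one_two (α : Fin 4 → ℝ) :
    wedge (jCovector 1 α) (jCovector 2 α) = (α ⬝ᵥ α) • sdBasis 0 - wedge α (jCovector 0 α) := by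
  ext a b
  fin_cases a <;> fin_cases b <;>
    simp [jCovector, wedge, sdBasis, dotProduct, Fin.sum_univ_four] <;>
    ring

theorem sum_jWedgeForm_mul_sdBasis (α : Fin 4 → ℝ) (i : Fin 3) :
    ∑ a, ∑ b, jWedgeForm α a b * sdBasis i a b = 0 := by
  fin_cases i <;>
    simp [jWedgeForm, jCovector, wedge, sdBasis, dotProduct, Fin.sum_univ_four] <;>
    ring

theorem Je_apply (i : Fin 3) (k a : Fin 4) : Je i k a = sdBasis i k a := by
  simp [Je, Pi.single_apply]

theorem inner_Je (x : E4) (i : Fin 3) (b : Fin 4) : ⟪x, Je i b⟫ = (sdBasis i *ᵥ x) b := by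
  simp [Je, inner_sum, inner_smul_right, EuclideanSpace.inner_single_right, Matrix.mulVec,
    dotProduct]

theorem dr_eq (x : E4) (hx : x ≠ 0) : (dr · x) = ‖x‖⁻¹ • ⇑x := by
  ext a
  simp [dr, (hasFDerivAt_norm_of_ne_zero hx).fderiv, EuclideanSpace.inner_single_right]

theorem dr_dotProduct_self (x : E4) (hx : x ≠ 0) : (dr · x) ⬝ᵥ (dr · x) = 1 := by
  have hx' : ‖x‖ ≠ 0 := norm_ne_zero_iff.mpr hx
  have hnorm : ⇑x ⬝ᵥ ⇑x = ‖x‖ ^ 2 := by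
    rw [← real_inner_self_eq_norm_sq, EuclideanSpace.inner_eq_star_dotProduct, star_trivial]
  rw [dr_eq x hx, smul_dotProduct, dotProduct_smul, hnorm, smul_eq_mul, smul_eq_mul]
  field_simp

theorem Jdr_eq_jCovector (i : Fin 3) (x : E4) : (Jdr i · x) = jCovector i (dr · x) := by
  ext b
  simp [Jdr, jCovector, dr, Je, Matrix.mulVec, dotProduct]

theorem dCpsi_eq (b : Fin 4) {y : E4} (hy : y ≠ 0) : dCpsi b y = 2 * (⟪y, Je 0 b⟫ / ‖y‖ ^ 4) := by
  have hpsi : HasFDerivAt psi _ y := hasFDerivAt_inv_norm_sq hy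
  rw [dCpsi, hpsi.fderiv]
  simp only [smul_apply, innerSL_apply_apply, smul_eq_mul]
  ring

theorem fderiv_dCpsi_single (a b : Fin 4) (x : E4) (hx : x ≠ 0) :
    fderiv ℝ (dCpsi b) x (EuclideanSpace.single a 1) =
      2 * (sdBasis 0 b a / ‖x‖ ^ 4 - 4 * (sdBasis 0 *ᵥ x) b * x a / ‖x‖ ^ 6) := by
  have hd : dCpsi b =ᶠ[nhds x] fun y => 2 * (⟪y, Je 0 b⟫ / ‖y‖ ^ 4) :=
    (eventually_ne_nhds hx).mono fun y hy => dCpsi_eq b hy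
  rw [hd.fderiv_eq, ((hasFDerivAt_inner_div_norm_pow_four (Je 0 b) hx).const_mul 2).fderiv]
  simp only [smul_apply, sub_apply, innerSL_apply_apply, EuclideanSpace.inner_single_right,
    inner_Je, Je_apply, Real.ringHom_apply, one_mul, smul_eq_mul]
  ring

theorem ddC_eq (a b : Fin 4) (x : E4) (hx : x ≠ 0) :
    ddC a b x = 4 / ‖x‖ ^ 4 * (2 * wedge (dr · x) (jCovector 0 (dr · x)) a b - sdBasis 0 a b) := by
  have hx' : ‖x‖ ≠ 0 := norm_ne_zero_iff.mpr hx
  have hanti : sdBasis 0 b a = -sdBasis 0 a b := by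
    rw [← Matrix.transpose_apply (sdBasis 0), sdBasis_transpose, Matrix.neg_apply]
  rw [ddC, fderiv_dCpsi_single a b x hx, fderiv_dCpsi_single b a x hx, hanti, dr_eq x hx]
  simp only [wedge, jCovector, Matrix.mulVec_smul, Pi.neg_apply, Pi.smul_apply, smul_eq_mul]
  field_simp
  ring

theorem ddC_eq_jWedgeForm (a b : Fin 4) (x : E4) (hx : x ≠ 0) :
    ddC a b x = 4 / ‖x‖ ^ 4 * jWedgeForm (dr · x) a b := by
  rw [ddC_eq a b x hx, jWedgeForm, wedge_jCovector_one_two, dr_dotProduct_self x hx]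
  simp only [Matrix.sub_apply, one_smul]
  ring

theorem jWedgeForm_dr_apply (x : E4) (a b : Fin 4) :
    jWedgeForm (dr · x) a b = (dr a x * Jdr 0 b x - dr b x * Jdr 0 a x)
      - (Jdr 1 a x * Jdr 2 b x - Jdr 1 b x * Jdr 2 a x) := by
  simp only [jWedgeForm, ← Jdr_eq_jCovector, wedge, Matrix.sub_apply]

/-- on `ℝ⁴ ∖ {0}`, `ψ = 1/r²` satisfies
`dd^Cψ = (4/r⁴)(dr ∧ J₁dr − J₂dr ∧ J₃dr)`, and this 2-form is anti-self-dual
(pointwise orthogonal to the self-dual forms ω₁, ω₂, ω₃). -/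
theorem stmt5 (x : E4) (hx : x ≠ 0) :
    (∀ a b : Fin 4,
      ddC a b x = (4 / ‖x‖ ^ 4) *
        ((dr a x * Jdr 0 b x - dr b x * Jdr 0 a x)
          - (Jdr 1 a x * Jdr 2 b x - Jdr 1 b x * Jdr 2 a x))) ∧
    (∀ i : Fin 3, ∑ a : Fin 4, ∑ b : Fin 4, ddC a b x * sdBasis i a b = 0) := by
  refine ⟨fun a b => by rw [ddC_eq_jWedgeForm a b x hx, jWedgeForm_dr_apply], fun i => ?_⟩
  simp_rw [ddC_eq_jWedgeForm _ _ x hx, mul_assoc, ← mul_sum, sum_jWedgeForm_mul_sdBasis, mul_zero]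
end
end

section
/- Let U ⊂ ℝ³ be open, V : U → ℝ a smooth positive function, and η a smooth 1-form (connection form) on a principal circle bundle over U with dη = *₃ dV, where *₃ is the Hodge star of the Euclidean metric on ℝ³. On the total space, with the metric g = V((dx¹)² + (dx²)² + (dx³)²) + V⁻¹η², the 2-form ω₁ = dx¹ ∧ η + V dx² ∧ dx³ is closed. Conversely, if ω₁ is closed (together with its cyclic analogues ω₂ = dx²∧η + V dx³∧dx¹ and ω₃ = dx³∧η + V dx¹∧dx²) then dη = *₃ dV; in particular closedness of all three ωᵢ forces V to be harmonic on U. -/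
noncomputable section

open Finset

/-- Levi-Civita symbol on three indices. -/
def eps3 (i j k : Fin 3) : ℝ :=
  Matrix.det (Matrix.of fun r c => if ![i,j,k] r = c then (1 : ℝ) else 0)

/-- Partial derivative in the `a`-th coordinate direction on ℝ³. -/
def pd3 (a : Fin 3) (f : (Fin 3 → ℝ) → ℝ) (x : Fin 3 → ℝ) : ℝ :=
  fderiv ℝ f x (Pi.single a 1)

/-- Base components of the 2-form `ωᵢ = dxⁱ ∧ η + V dxʲ ∧ dxᵏ` on the total
space of the circle bundle, where `η = dθ + α`.  Since the coefficients are
pulled back from the base and the `dθ`-components of `ωᵢ` are constant, `ωᵢ`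
is closed if and only if the cyclic sum of partial derivatives of these
base-base components vanishes. -/
def ghForm (V : (Fin 3 → ℝ) → ℝ) (α : (Fin 3 → ℝ) → Fin 3 → ℝ) (i : Fin 3)
    (x : Fin 3 → ℝ) (a b : Fin 3) : ℝ :=
  (if a = i then α x b else 0) - (if b = i then α x a else 0) + V x * eps3 i a b

/-- Closedness of `ωᵢ` on `U` (the `dθ`-components being automatically closed). -/
def ghClosed (U : Set (Fin 3 → ℝ)) (V : (Fin 3 → ℝ) → ℝ)
    (α : (Fin 3 → ℝ) → Fin 3 → ℝ) (i : Fin 3) : Prop :=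
  ∀ x ∈ U, ∀ a b c : Fin 3,
    pd3 a (fun y => ghForm V α i y b c) x
      + pd3 b (fun y => ghForm V α i y c a) x
      + pd3 c (fun y => ghForm V α i y a b) x = 0

/-- The monopole equation `dη = dα = *₃ dV` on `U`. -/
def ghMonopole (U : Set (Fin 3 → ℝ)) (V : (Fin 3 → ℝ) → ℝ)
    (α : (Fin 3 → ℝ) → Fin 3 → ℝ) : Prop :=
  ∀ x ∈ U, ∀ a b : Fin 3,
    pd3 a (fun y => α y b) x - pd3 b (fun y => α y a) x
      = ∑ c : Fin 3, eps3 a b c * pd3 c V x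

set_option maxHeartbeats 1000000

-- auxiliary lemmas

/-- Arithmetic formula for the Levi-Civita symbol on `Fin 3`. -/
lemma eps3_formula (i j k : Fin 3) :
    eps3 i j k = ((i:ℝ) - j) * ((j:ℝ) - k) * ((k:ℝ) - i) / 2 := by
  fin_cases i <;> fin_cases j <;> fin_cases k <;>
    simp [eps3, Matrix.det_fin_three] <;> norm_num

lemma fin3_mk (h0 : 0 < 3) (h1 : 1 < 3) (h2 : 2 < 3) :
    ((⟨0, h0⟩ : Fin 3) = 0) ∧ ((⟨1, h1⟩ : Fin 3) = 1) ∧ ((⟨2, h2⟩ : Fin 3) = 2) :=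
  ⟨rfl, rfl, rfl⟩

lemma pd3_comb (c₁ c₂ c₃ : ℝ) {f g h : (Fin 3 → ℝ) → ℝ} {x : Fin 3 → ℝ}
    (hf : DifferentiableAt ℝ f x) (hg : DifferentiableAt ℝ g x)
    (hh : DifferentiableAt ℝ h x) (a : Fin 3) :
    pd3 a (fun y => c₁ * f y + c₂ * g y + c₃ * h y) x
      = c₁ * pd3 a f x + c₂ * pd3 a g x + c₃ * pd3 a h x := by
  have H : HasFDerivAt (fun y => c₁ * f y + c₂ * g y + c₃ * h y)
      (c₁ • fderiv ℝ f x + c₂ • fderiv ℝ g x + c₃ • fderiv ℝ h x) x :=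
    ((hf.hasFDerivAt.const_mul c₁).add (hg.hasFDerivAt.const_mul c₂)).add
      (hh.hasFDerivAt.const_mul c₃)
  simp only [pd3, H.fderiv, ContinuousLinearMap.add_apply,
    ContinuousLinearMap.coe_smul', Pi.smul_apply, smul_eq_mul]

lemma pd3_ghForm {V : (Fin 3 → ℝ) → ℝ} {α : (Fin 3 → ℝ) → Fin 3 → ℝ} {x : Fin 3 → ℝ}
    (dV : DifferentiableAt ℝ V x) (dα : ∀ b, DifferentiableAt ℝ (fun y => α y b) x)
    (i a b c : Fin 3) :
    pd3 a (fun y => ghForm V α i y b c) x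
      = (if b = i then (1:ℝ) else 0) * pd3 a (fun y => α y c) x
        + (-(if c = i then (1:ℝ) else 0)) * pd3 a (fun y => α y b) x
        + eps3 i b c * pd3 a V x := by
  have hfun : (fun y => ghForm V α i y b c)
      = fun y => (if b = i then (1:ℝ) else 0) * α y c
        + (-(if c = i then (1:ℝ) else 0)) * α y b + eps3 i b c * V y := by
    funext y; simp only [ghForm]; split_ifs <;> ring
  rw [hfun, pd3_comb _ _ _ (dα c) (dα b) dV]

lemma key1 (A : Fin 3 → Fin 3 → ℝ) (W : Fin 3 → ℝ)
    (H : ∀ a b, A a b - A b a = ∑ c, eps3 a b c * W c) (i a b c : Fin 3) :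
    ((if b = i then (1:ℝ) else 0) * A a c + (-(if c = i then (1:ℝ) else 0)) * A a b
        + eps3 i b c * W a)
      + ((if c = i then (1:ℝ) else 0) * A b a + (-(if a = i then (1:ℝ) else 0)) * A b c
        + eps3 i c a * W b)
      + ((if a = i then (1:ℝ) else 0) * A c b + (-(if b = i then (1:ℝ) else 0)) * A c a
        + eps3 i a b * W c) = 0 := by
  have h01 := H 0 1
  have h12 := H 1 2
  have h20 := H 2 0
  simp only [Fin.sum_univ_three, eps3_formula] at h01 h12 h20
  norm_num at h01 h12 h20
  clear H
  fin_cases i <;> fin_cases a <;> fin_cases b <;> fin_cases c <;>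
    norm_num [eps3_formula, Fin.ext_iff, (fin3_mk (by norm_num) (by norm_num) (by norm_num)).1, (fin3_mk (by norm_num) (by norm_num) (by norm_num)).2.1, (fin3_mk (by norm_num) (by norm_num) (by norm_num)).2.2] <;> linarith

lemma key2 (A : Fin 3 → Fin 3 → ℝ) (W : Fin 3 → ℝ)
    (E : ∀ i a b c : Fin 3,
      ((if b = i then (1:ℝ) else 0) * A a c + (-(if c = i then (1:ℝ) else 0)) * A a b
          + eps3 i b c * W a)
        + ((if c = i then (1:ℝ) else 0) * A b a + (-(if a = i then (1:ℝ) else 0)) * A b c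
          + eps3 i c a * W b)
        + ((if a = i then (1:ℝ) else 0) * A c b + (-(if b = i then (1:ℝ) else 0)) * A c a
          + eps3 i a b * W c) = 0) (a b : Fin 3) :
    A a b - A b a = ∑ c, eps3 a b c * W c := by
  have e0 := E 0 0 1 2
  have e1 := E 1 1 2 0
  have e2 := E 2 2 0 1
  simp only [eps3_formula] at e0 e1 e2
  norm_num [Fin.ext_iff] at e0 e1 e2
  clear E
  fin_cases a <;> fin_cases b <;>
    norm_num [Fin.sum_univ_three, eps3_formula, Fin.ext_iff, (fin3_mk (by norm_num) (by norm_num) (by norm_num)).1, (fin3_mk (by norm_num) (by norm_num) (by norm_num)).2.1, (fin3_mk (by norm_num) (by norm_num) (by norm_num)).2.2] <;> linarith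

lemma diff_pd3 {f : (Fin 3 → ℝ) → ℝ} {x : Fin 3 → ℝ} (hf : ContDiffAt ℝ (⊤ : ℕ∞) f x) (b : Fin 3) :
    DifferentiableAt ℝ (fun y => pd3 b f y) x := by
  have h1 : DifferentiableAt ℝ (fderiv ℝ f) x :=
    (hf.fderiv_right (m := 1) (WithTop.coe_le_coe.mpr le_top)).differentiableAt one_ne_zero
  exact ((ContinuousLinearMap.apply ℝ ℝ (Pi.single b 1)).differentiable.differentiableAt).comp x h1

lemma pd3_pd3 {f : (Fin 3 → ℝ) → ℝ} {x : Fin 3 → ℝ} (hf : ContDiffAt ℝ (⊤ : ℕ∞) f x) (a b : Fin 3) :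
    pd3 a (fun y => pd3 b f y) x
      = fderiv ℝ (fderiv ℝ f) x (Pi.single a 1) (Pi.single b 1) := by
  have h1 : DifferentiableAt ℝ (fderiv ℝ f) x :=
    (hf.fderiv_right (m := 1) (WithTop.coe_le_coe.mpr le_top)).differentiableAt one_ne_zero
  have h2 : DifferentiableAt ℝ (fun _ : Fin 3 → ℝ => (Pi.single b 1 : Fin 3 → ℝ)) x :=
    differentiableAt_const _
  simp only [pd3]
  rw [fderiv_clm_apply h1 h2]
  simp

lemma pd3_comm {f : (Fin 3 → ℝ) → ℝ} {x : Fin 3 → ℝ} (hf : ContDiffAt ℝ (⊤ : ℕ∞) f x) (a b : Fin 3) :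
    pd3 a (fun y => pd3 b f y) x = pd3 b (fun y => pd3 a f y) x := by
  rw [pd3_pd3 hf a b, pd3_pd3 hf b a]
  exact hf.isSymmSndFDerivAt (by rw [minSmoothness_of_isRCLikeNormedField]; exact WithTop.coe_le_coe.mpr le_top) _ _

lemma pd3_congr_nhds {f g : (Fin 3 → ℝ) → ℝ} {x : Fin 3 → ℝ}
    (h : f =ᶠ[nhds x] g) (a : Fin 3) : pd3 a f x = pd3 a g x := by
  simp only [pd3, h.fderiv_eq]

lemma pd3_sub {f g : (Fin 3 → ℝ) → ℝ} {x : Fin 3 → ℝ}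
    (hf : DifferentiableAt ℝ f x) (hg : DifferentiableAt ℝ g x) (a : Fin 3) :
    pd3 a (fun y => f y - g y) x = pd3 a f x - pd3 a g x := by
  simp only [pd3, fderiv_fun_sub hf hg, ContinuousLinearMap.sub_apply]

/-- Gibbons–Hawking ansatz, local form: let `U ⊂ ℝ³` be open and
`V`, `α` smooth on `U` (with `η = dθ + α` the connection form). If `dα = *₃dV`
then each of the three 2-forms `ωᵢ = dxⁱ∧η + V dxʲ∧dxᵏ` is closed; conversely,
if all three `ωᵢ` are closed then `dα = *₃dV`, and in particular `V` is
harmonic on `U`. -/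
theorem stmt10 (U : Set (Fin 3 → ℝ)) (hU : IsOpen U)
    (V : (Fin 3 → ℝ) → ℝ) (α : (Fin 3 → ℝ) → Fin 3 → ℝ)
    (hV : ContDiffOn ℝ (⊤ : ℕ∞) V U) (hα : ∀ b : Fin 3, ContDiffOn ℝ (⊤ : ℕ∞) (fun y => α y b) U)
    (hVpos : ∀ x ∈ U, 0 < V x) :
    (ghMonopole U V α → ∀ i : Fin 3, ghClosed U V α i) ∧
    ((∀ i : Fin 3, ghClosed U V α i) →
      ghMonopole U V α ∧ ∀ x ∈ U, ∑ c : Fin 3, pd3 c (fun y => pd3 c V y) x = 0) := by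
  have cV : ∀ x ∈ U, ContDiffAt ℝ (⊤ : ℕ∞) V x := fun x hx => hV.contDiffAt (hU.mem_nhds hx)
  have cα : ∀ (b : Fin 3), ∀ x ∈ U, ContDiffAt ℝ (⊤ : ℕ∞) (fun y => α y b) x :=
    fun b x hx => (hα b).contDiffAt (hU.mem_nhds hx)
  have dV : ∀ x ∈ U, DifferentiableAt ℝ V x :=
    fun x hx => (cV x hx).differentiableAt (by simp)
  have dα : ∀ x ∈ U, ∀ b, DifferentiableAt ℝ (fun y => α y b) x :=
    fun x hx b => (cα b x hx).differentiableAt (by simp)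
  constructor
  · intro hM i x hx a b c
    rw [pd3_ghForm (dV x hx) (dα x hx), pd3_ghForm (dV x hx) (dα x hx),
      pd3_ghForm (dV x hx) (dα x hx)]
    exact key1 (fun a b => pd3 a (fun y => α y b) x) (fun c => pd3 c V x)
      (hM x hx) i a b c
  · intro hC
    have hM : ghMonopole U V α := by
      intro x hx a b
      refine key2 (fun a b => pd3 a (fun y => α y b) x) (fun c => pd3 c V x) ?_ a b
      intro i a b c
      have h := hC i x hx a b c
      rwa [pd3_ghForm (dV x hx) (dα x hx), pd3_ghForm (dV x hx) (dα x hx),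
        pd3_ghForm (dV x hx) (dα x hx)] at h
    refine ⟨hM, ?_⟩
    intro x hx
    -- reexpress first derivatives of V via α on a neighborhood of x
    have hq : ∀ p q r : Fin 3, eps3 p q r = 1 →
        (fun y => pd3 r V y) =ᶠ[nhds x]
          fun y => pd3 p (fun z => α z q) y - pd3 q (fun z => α z p) y := by
      intro p q r hpqr
      filter_upwards [hU.mem_nhds hx] with y hy
      have h := hM y hy p q
      fin_cases p <;> fin_cases q <;> fin_cases r <;>
        norm_num [eps3_formula] at hpqr <;>
        norm_num [Fin.sum_univ_three, eps3_formula, Fin.ext_iff,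
          (fin3_mk (by norm_num) (by norm_num) (by norm_num)).1,
          (fin3_mk (by norm_num) (by norm_num) (by norm_num)).2.1,
          (fin3_mk (by norm_num) (by norm_num) (by norm_num)).2.2] at h ⊢ <;>
        linarith
    have h120 : eps3 1 2 0 = 1 := by norm_num [eps3_formula]
    have h201 : eps3 2 0 1 = 1 := by norm_num [eps3_formula]
    have h012 : eps3 0 1 2 = 1 := by norm_num [eps3_formula]
    have key : ∀ p q r : Fin 3, eps3 p q r = 1 →
        pd3 r (fun y => pd3 r V y) x
          = pd3 r (fun y => pd3 p (fun z => α z q) y) x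
            - pd3 r (fun y => pd3 q (fun z => α z p) y) x := by
      intro p q r hpqr
      rw [pd3_congr_nhds (hq p q r hpqr) r]
      exact pd3_sub (diff_pd3 (cα q x hx) p) (diff_pd3 (cα p x hx) q) r
    have e0 := key 1 2 0 h120
    have e1 := key 2 0 1 h201
    have e2 := key 0 1 2 h012
    have c01 := pd3_comm (cα 2 x hx) 0 1
    have c12 := pd3_comm (cα 0 x hx) 1 2
    have c20 := pd3_comm (cα 1 x hx) 2 0
    rw [Fin.sum_univ_three, e0, e1, e2]
    linarith
end
end
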